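/- arXiv:0809.1401 — 5 statements merged into one kernel-verified Lean document; each statement's English description precedes it below -/
import Mathlib

section
/- Let q be a positive real number and z1, z2, z3 nonzero complex numbers with z1*z2*z3 = 1. Let M be the linear operator on C^6 (with basis f1,...,f6) defined by M(f1) = z1*z3*f2, M(f2) = q*z2*z3*f1, M(f3) = (q-1)*z1*z3*f2 + z1*z2*f6, M(f4) = (q-1)*q*z2*z3*f3 + q*z1*z3*f5, M(f5) = (q-1)*q*z2*z3*f1 + z1*z2*f4, M(f6) = q*z2*z3*f3. Then the characteristic polynomial of M equals (x^2 - q*z1)(x^2 - q*z2)(x^2 - q*z3). -/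
/-! In the basis order `f1, f2 | f3, f6 | f4, f5` the matrix of `L_B` is block upper triangular,
and each diagonal block is antidiagonal, `!![0, a; c, 0]`, with characteristic polynomial
`X ^ 2 - a * c`. The three products `a * c` are `q z2 z3 · z1 z3`, `q z2 z3 · z1 z2` and
`z1 z2 · q z1 z3`, which are `q z3`, `q z2`, `q z1` because `z1 z2 z3 = 1`. -/

open Polynomial Matrix

/-- The matrix of the Iwahori-Hecke operator `L_B` on the six-dimensional space of
Iwahori-fixed vectors, in the basis `f1, ..., f6` (columns are images of basis vectors). -/
def LB (q z1 z2 z3 : ℂ) : Matrix (Fin 6) (Fin 6) ℂ :=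
  !![0,       q*z2*z3, 0,           0,             (q-1)*q*z2*z3, 0;
     z1*z3,   0,       (q-1)*z1*z3, 0,             0,             0;
     0,       0,       0,           (q-1)*q*z2*z3, 0,             q*z2*z3;
     0,       0,       0,           0,             z1*z2,         0;
     0,       0,       0,           q*z1*z3,       0,             0;
     0,       0,       z1*z2,       0,             0,             0]

open Finset

namespace Matrix

variable {R n : Type*} [CommRing R] [Fintype n] [DecidableEq n]

theorem charpoly_eq_of_univ_eq_pair (M : Matrix n n R) {i j : n} (hij : i ≠ j)
    (huniv : (univ : Finset n) = {i, j}) :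
    M.charpoly = X ^ 2 - C (M i i + M j j) * X + C (M i i * M j j - M i j * M j i) := by
  have hbij : Function.Bijective ![i, j] := by
    rw [Fintype.bijective_iff_injective_and_card, Fintype.card_fin, ← Finset.card_univ, huniv,
      card_pair hij]
    refine ⟨fun a b hab => ?_, rfl⟩
    fin_cases a <;> fin_cases b <;> simp_all [eq_comm]
  let e := Equiv.ofBijective _ hbij
  rw [← charpoly_reindex e.symm, charpoly, charmatrix_reindex, det_fin_two]
  simp only [reindex_apply, submatrix_apply, Equiv.symm_symm, e, Equiv.coe_ofBijective,
    cons_val_zero, cons_val_one, cons_val_fin_one, charmatrix_apply_eq,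
    charmatrix_apply_ne _ _ _ hij, charmatrix_apply_ne _ _ _ hij.symm, map_add, map_sub, map_mul]
  ring

theorem charpoly_toSquareBlock_eq_of_pair {α : Type*} [DecidableEq α] (M : Matrix n n R)
    {b : n → α} {a : α} {i j : n} (hij : i ≠ j) (hblock : ∀ k, b k = a ↔ k = i ∨ k = j)
    (hi : M i i = 0) (hj : M j j = 0) :
    (M.toSquareBlock b a).charpoly = X ^ 2 - C (M i j * M j i) := by
  have hbi : b i = a := (hblock i).2 (.inl rfl)
  have hbj : b j = a := (hblock j).2 (.inr rfl)
  have huniv : (univ : Finset {k // b k = a}) = {⟨i, hbi⟩, ⟨j, hbj⟩} := by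
    refine (eq_univ_iff_forall.mpr fun ⟨k, hk⟩ => ?_).symm
    rcases (hblock k).1 hk with rfl | rfl <;> simp
  rw [charpoly_eq_of_univ_eq_pair _ (by simpa using hij) huniv]
  simp [toSquareBlock_def, hi, hj, sub_eq_add_neg]

end Matrix

def blockIndexLB : Fin 6 → Fin 3 := ![0, 0, 1, 2, 2, 1]

theorem LB_blockTriangular (q z1 z2 z3 : ℂ) : (LB q z1 z2 z3).BlockTriangular blockIndexLB := by
  intro i j hij
  fin_cases i <;> fin_cases j <;> simp_all [blockIndexLB, LB]

theorem charpoly_LB_general (q : ℝ) (z1 z2 z3 : ℂ) (h : z1 * z2 * z3 = 1) :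
    (LB (q : ℂ) z1 z2 z3).charpoly =
      (X ^ 2 - C ((q : ℂ) * z1)) * (X ^ 2 - C ((q : ℂ) * z2)) * (X ^ 2 - C ((q : ℂ) * z3)) := by
  set M := LB (q : ℂ) z1 z2 z3
  have h01 : M 0 1 * M 1 0 = q * z3 :=
    show (q * z2 * z3) * (z1 * z3) = (q * z3 : ℂ) by linear_combination (q * z3 : ℂ) * h
  have h25 : M 2 5 * M 5 2 = q * z2 :=
    show (q * z2 * z3) * (z1 * z2) = (q * z2 : ℂ) by linear_combination (q * z2 : ℂ) * h
  have h34 : M 3 4 * M 4 3 = q * z1 :=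
    show (z1 * z2) * (q * z1 * z3) = (q * z1 : ℂ) by linear_combination (q * z1 : ℂ) * h
  have himage : image blockIndexLB univ = univ := by decide
  rw [(LB_blockTriangular _ _ _ _).charpoly, himage, Fin.prod_univ_three,
    charpoly_toSquareBlock_eq_of_pair M (i := 0) (j := 1) (by decide) (by decide) rfl rfl,
    charpoly_toSquareBlock_eq_of_pair M (i := 2) (j := 5) (by decide) (by decide) rfl rfl,
    charpoly_toSquareBlock_eq_of_pair M (i := 3) (j := 4) (by decide) (by decide) rfl rfl,
    h01, h25, h34]
  ring

theorem charpoly_LB (q : ℝ) (hq : 0 < q) (z1 z2 z3 : ℂ)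
    (hz1 : z1 ≠ 0) (hz2 : z2 ≠ 0) (hz3 : z3 ≠ 0) (h : z1 * z2 * z3 = 1) :
    (LB (q : ℂ) z1 z2 z3).charpoly =
      (X ^ 2 - C ((q : ℂ) * z1)) * (X ^ 2 - C ((q : ℂ) * z2)) * (X ^ 2 - C ((q : ℂ) * z3)) :=
  charpoly_LB_general q z1 z2 z3 h
end

section
/- Let q be a positive real number and z1, z2, z3 nonzero complex numbers with z1*z2*z3 = 1. Let M be the 6x6 matrix as above describing L_B. Then det(M) = -q^3. -/
open Polynomial Matrix

/-!
`L_B` exchanges the lines through `f1` and `f2`, and, modulo the span of the earlier basis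
vectors, also those through `f3, f6` and through `f4, f5`. Exchanging the two columns of each
pair, an odd permutation, makes the matrix upper triangular with diagonal product
`q ^ 3 * (z1 * z2 * z3) ^ 4`, so `det L_B = -q ^ 3 * (z1 * z2 * z3) ^ 4`.
-/

open Equiv

namespace LB

def blockSwap : Perm (Fin 6) := swap 0 1 * swap 2 5 * swap 3 4

theorem sign_blockSwap : Perm.sign blockSwap = -1 := by decide

variable (q z1 z2 z3 : ℂ)

theorem isUpperTriangular_submatrix_blockSwap :
    ((LB q z1 z2 z3).submatrix id blockSwap).IsUpperTriangular := by
  intro i j hij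
  fin_cases i <;> fin_cases j <;> first | rfl | exact absurd hij (by decide)

theorem prod_apply_blockSwap :
    ∏ i, LB q z1 z2 z3 i (blockSwap i) = q ^ 3 * (z1 * z2 * z3) ^ 4 := by
  rw [Fin.prod_univ_six]
  show q * z2 * z3 * (z1 * z3) * (q * z2 * z3) * (z1 * z2) * (q * z1 * z3) * (z1 * z2) = _
  ring

theorem det_eq : (LB q z1 z2 z3).det = -q ^ 3 * (z1 * z2 * z3) ^ 4 := by
  have h := det_permute' blockSwap (LB q z1 z2 z3)
  rw [det_of_isUpperTriangular (isUpperTriangular_submatrix_blockSwap q z1 z2 z3),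
    sign_blockSwap] at h
  simp only [submatrix_apply, id_eq, prod_apply_blockSwap, Units.val_neg, Units.val_one,
    Int.cast_neg, Int.cast_one] at h
  linear_combination h

end LB

theorem det_LB_general (q : ℝ) (z1 z2 z3 : ℂ)
    (h : z1 * z2 * z3 = 1) :
    (LB (q : ℂ) z1 z2 z3).det = -(q : ℂ) ^ 3 := by
  rw [LB.det_eq, h]
  ring

theorem det_LB (q : ℝ) (hq : 0 < q) (z1 z2 z3 : ℂ)
    (hz1 : z1 ≠ 0) (hz2 : z2 ≠ 0) (hz3 : z3 ≠ 0) (h : z1 * z2 * z3 = 1) :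
    (LB (q : ℂ) z1 z2 z3).det = -(q : ℂ) ^ 3 :=
  det_LB_general q z1 z2 z3 h
end

section
/- Let q be a positive real number and z a complex number with z^3 = 1. Set z1 = z/q, z2 = z, z3 = q*z, and let M be the 6x6 L_B matrix with these parameters (M(f1) = z1*z3*f2, M(f2) = q*z2*z3*f1, M(f3) = (q-1)*z1*z3*f2 + z1*z2*f6, M(f4) = (q-1)*q*z2*z3*f3 + q*z1*z3*f5, M(f5) = (q-1)*q*z2*z3*f1 + z1*z2*f4, M(f6) = q*z2*z3*f3). Then the vector phi = f1 - (1/q)*f2 - (1/q)*f3 - (1/q^3)*f4 + (1/q^2)*f5 + (1/q^2)*f6 satisfies M(phi) = -z^2 * phi. -/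
open Matrix

theorem LB_mulVec (q z1 z2 z3 a b c d e f : ℂ) :
    LB q z1 z2 z3 *ᵥ ![a, b, c, d, e, f] =
      ![q*z2*z3*b + (q-1)*q*z2*z3*e, z1*z3*a + (q-1)*z1*z3*c,
        (q-1)*q*z2*z3*d + q*z2*z3*f, z1*z2*e, q*z1*z3*d, z1*z2*c] := by
  ext i
  fin_cases i <;> simp [LB, mulVec, dotProduct, Fin.sum_univ_succ]

theorem steinberg_eigenvector_general (q : ℝ) (hq : 0 < q) (z : ℂ) :
    (LB (q : ℂ) (z / (q : ℂ)) z ((q : ℂ) * z)).mulVec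
        ![1, -1/(q : ℂ), -1/(q : ℂ), -1/(q : ℂ)^3, 1/(q : ℂ)^2, 1/(q : ℂ)^2] =
      (-z ^ 2) • ![1, -1/(q : ℂ), -1/(q : ℂ), -1/(q : ℂ)^3, 1/(q : ℂ)^2, 1/(q : ℂ)^2] := by
  have hq0 : (q : ℂ) ≠ 0 := Complex.ofReal_ne_zero.mpr hq.ne'
  rw [LB_mulVec]
  simp only [smul_cons, smul_empty, vecCons_inj, smul_eq_mul, and_true]
  refine ⟨?_, ?_, ?_, ?_, ?_, ?_⟩ <;> field_simp <;> ring

theorem steinberg_eigenvector (q : ℝ) (hq : 0 < q) (z : ℂ) (hz : z ^ 3 = 1) :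
    (LB (q : ℂ) (z / (q : ℂ)) z ((q : ℂ) * z)).mulVec
        ![1, -1/(q : ℂ), -1/(q : ℂ), -1/(q : ℂ)^3, 1/(q : ℂ)^2, 1/(q : ℂ)^2] =
      (-z ^ 2) • ![1, -1/(q : ℂ), -1/(q : ℂ), -1/(q : ℂ)^3, 1/(q : ℂ)^2, 1/(q : ℂ)^2] :=
  steinberg_eigenvector_general q hq z
end

section
/- Let q be a positive real number and w a complex number with |w| = 1 (or simply w nonzero). Set z1 = q^{1/2}*w, z2 = q^{-1/2}*w, z3 = w^{-2}. Let M be the 6x6 L_B matrix with these parameters (as in the standard formula). Then the subspace W spanned by v1 = f1 + f2, v2 = f3 + f5, v3 = f4 + f6 is invariant under M, and the characteristic polynomial of M restricted to W equals (x - q^{1/2}*w^{-1})*(x^2 - q^{3/2}*w); in particular the eigenvalues of M on W are q^{1/2}*w^{-1} and the two square roots of q^{3/2}*w. -/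
/-
On `W = span(f1 + f2, f3 + f5, f4 + f6)` the operator `L_B` acts by a block matrix
`!![a, (q-1)a, 0; 0, 0, q a; 0, z1 z2, 0]` with `a = q z2 z3`, as soon as `z1 = q z2`; the
characteristic polynomial of such a matrix factors as `(X - a)(X² - q a z1 z2)`. For type (d)
`z1 = q z2` holds because `z1 / z2 = (q^{1/2})² = q`, and then `a = q^{1/2} w⁻¹` and
`q a z1 z2 = q^{3/2} w`.
-/

open Polynomial Matrix

theorem linearIndependent_typeD_vectors {R : Type*} [Ring R] :
    LinearIndependent R
      ![![(1 : R), 1, 0, 0, 0, 0], ![0, 0, 1, 0, 1, 0], ![0, 0, 0, 1, 0, 1]] := by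
  rw [Fintype.linearIndependent_iff]
  intro g hg i
  fin_cases i
  · simpa [Fin.sum_univ_three] using congrFun hg 0
  · simpa [Fin.sum_univ_three] using congrFun hg 2
  · simpa [Fin.sum_univ_three] using congrFun hg 3

def LBTypeD (q z1 z2 z3 : ℂ) : Matrix (Fin 3) (Fin 3) ℂ :=
  !![q*z2*z3, (q-1)*q*z2*z3, 0;
     0,       0,             q*q*z2*z3;
     0,       z1*z2,         0]

theorem LB_mulVec_typeD_vectors {q z1 z2 z3 : ℂ} (hz : z1 = q * z2) (i : Fin 3) :
    let v : Fin 3 → (Fin 6 → ℂ) :=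
      ![![1, 1, 0, 0, 0, 0], ![0, 0, 1, 0, 1, 0], ![0, 0, 0, 1, 0, 1]]
    (LB q z1 z2 z3).mulVec (v i) = ∑ j, LBTypeD q z1 z2 z3 j i • v j := by
  subst hz
  ext k
  fin_cases i <;> fin_cases k <;>
    simp [LB, LBTypeD, mulVec, dotProduct, Fin.sum_univ_succ, -mul_eq_mul_left_iff,
      -mul_eq_mul_right_iff] <;> ring

theorem charpoly_fin_three_of_antidiagonal_block {R : Type*} [CommRing R] (a b c d : R) :
    (!![a, b, 0; 0, 0, c; 0, d, 0]).charpoly = (X - C a) * (X ^ 2 - C (c * d)) := by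
  rw [charpoly, det_fin_three]
  simp only [charmatrix_apply_eq, charmatrix_apply_ne, of_apply, cons_val', cons_val_zero,
    cons_val_fin_one, cons_val_one, cons_val, ne_eq, Fin.reduceEq, not_false_eq_true, map_zero,
    sub_zero, neg_zero, mul_zero, zero_mul, add_zero, map_mul]
  ring

theorem type_d_LB_restriction (q : ℝ) (hq : 0 < q) (w : ℂ) (hw : w ≠ 0) :
    let s : ℂ := ((q ^ ((1 : ℝ)/2) : ℝ) : ℂ)
    let M := LB (q : ℂ) (s * w) (s⁻¹ * w) ((w ^ 2)⁻¹)
    let v : Fin 3 → (Fin 6 → ℂ) :=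
      ![![1, 1, 0, 0, 0, 0], ![0, 0, 1, 0, 1, 0], ![0, 0, 0, 1, 0, 1]]
    LinearIndependent ℂ v ∧
    ∃ A : Matrix (Fin 3) (Fin 3) ℂ,
      (∀ i, M.mulVec (v i) = ∑ j, A j i • v j) ∧
      A.charpoly = (X - C (s * w⁻¹)) * (X ^ 2 - C (s ^ 3 * w)) := by
  intro s M v
  have hs_sq : s ^ 2 = q := by
    rw [← Complex.ofReal_pow, ← Real.rpow_natCast, ← Real.rpow_mul hq.le]
    norm_num
  have hs : s ≠ 0 := Complex.ofReal_ne_zero.mpr (Real.rpow_pos_of_pos hq _).ne'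
  have hz : s * w = q * (s⁻¹ * w) := by rw [← hs_sq]; field_simp
  refine ⟨linearIndependent_typeD_vectors, LBTypeD q (s * w) (s⁻¹ * w) (w ^ 2)⁻¹,
    LB_mulVec_typeD_vectors hz, ?_⟩
  rw [LBTypeD, charpoly_fin_three_of_antidiagonal_block, ← hs_sq]
  congr 3 <;> field_simp
end

section
/- Let q be a positive real number and w a nonzero complex number. Set z1 = q^{-1/2}*w, z2 = q^{1/2}*w, z3 = w^{-2}, and let M be the 6x6 L_B matrix with these parameters. Then the subspace spanned by v1 = f2 - q*f1, v2 = f5 - q*f3, v3 = f4 - q*f6 is invariant under M, and the characteristic polynomial of M restricted to this subspace equals (x + q^{1/2}*w^{-1})*(x^2 - q^{1/2}*w); in particular the eigenvalues are -q^{1/2}*w^{-1} and the two square roots of q^{1/2}*w. -/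
/-!
With `s = √q` the parameters satisfy `z2 = q z1`, and under this single relation `L_B` maps
`v1 = f2 - q f1`, `v2 = f5 - q f3`, `v3 = f4 - q f6` to combinations of themselves:
`M v1 = -c v1`, `M v2 = -(q-1) c v1 + d v3`, `M v3 = c v2` with `c = q z1 z3`, `d = z1 z2`.
The resulting `3 × 3` matrix is block triangular, with characteristic polynomial
`(X + c) (X² - c d)`; here `c = s w⁻¹` and `c d = s w`.
-/

open Polynomial Matrix

def typeEVec (q : ℂ) : Fin 3 → Fin 6 → ℂ :=
  ![![-q, 1, 0, 0, 0, 0], ![0, 0, -q, 0, 1, 0], ![0, 0, 0, 1, 0, -q]]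

def typeERestriction {R : Type*} [CommRing R] (q c d : R) : Matrix (Fin 3) (Fin 3) R :=
  !![-c, -(q - 1) * c, 0;
     0,  0,            c;
     0,  d,            0]

theorem linearIndependent_typeEVec (q : ℂ) : LinearIndependent ℂ (typeEVec q) := by
  rw [Fintype.linearIndependent_iff]
  -- the coordinates of the three vectors at `f2`, `f5`, `f4` form the identity matrix
  intro g hg i
  fin_cases i
  · simpa [typeEVec, Fin.sum_univ_succ] using congrFun hg 1
  · simpa [typeEVec, Fin.sum_univ_succ] using congrFun hg 4
  · simpa [typeEVec, Fin.sum_univ_succ] using congrFun hg 3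

theorem LB_mulVec_typeEVec {q z1 z2 z3 : ℂ} (hz : z2 = q * z1) (i : Fin 3) :
    LB q z1 z2 z3 *ᵥ typeEVec q i =
      ∑ j, typeERestriction q (q * z1 * z3) (z1 * z2) j i • typeEVec q j := by
  subst hz
  fin_cases i <;> ext x <;> fin_cases x <;>
    simp [LB, typeEVec, typeERestriction, mulVec, dotProduct, Fin.sum_univ_succ] <;> ring

theorem charpoly_typeERestriction {R : Type*} [CommRing R] (q c d : R) :
    (typeERestriction q c d).charpoly = (X + C c) * (X ^ 2 - C (c * d)) := by
  rw [charpoly, det_fin_three]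
  simp [typeERestriction]
  ring

theorem type_e_LB_restriction_general (q : ℝ) (hq : 0 < q) (w : ℂ) :
    let s : ℂ := ((q ^ ((1 : ℝ)/2) : ℝ) : ℂ)
    let M := LB (q : ℂ) (s⁻¹ * w) (s * w) ((w ^ 2)⁻¹)
    let v : Fin 3 → (Fin 6 → ℂ) :=
      ![![-(q : ℂ), 1, 0, 0, 0, 0], ![0, 0, -(q : ℂ), 0, 1, 0], ![0, 0, 0, 1, 0, -(q : ℂ)]]
    LinearIndependent ℂ v ∧
    ∃ A : Matrix (Fin 3) (Fin 3) ℂ,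
      (∀ i, M.mulVec (v i) = ∑ j, A j i • v j) ∧
      A.charpoly = (X + C (s * w⁻¹)) * (X ^ 2 - C (s * w)) := by
  intro s M v
  have hq_sq : (q : ℂ) = s * s := by
    rw [← Complex.ofReal_mul, ← Real.sqrt_eq_rpow, Real.mul_self_sqrt hq.le]
  have hz : s * w = q * (s⁻¹ * w) := by
    rw [hq_sq, ← mul_assoc, mul_self_mul_inv]
  have hc : (q : ℂ) * (s⁻¹ * w) * (w ^ 2)⁻¹ = s * w⁻¹ := by
    calc (q : ℂ) * (s⁻¹ * w) * (w ^ 2)⁻¹ = (s * s * s⁻¹) * (w⁻¹ * w⁻¹ * w⁻¹⁻¹) := by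
          rw [hq_sq, inv_inv]; ring
      _ = s * w⁻¹ := by rw [mul_self_mul_inv, mul_self_mul_inv]
  have hcd : s * w⁻¹ * (s⁻¹ * w * (s * w)) = s * w := by
    calc s * w⁻¹ * (s⁻¹ * w * (s * w)) = (s * s⁻¹ * s) * (w⁻¹ * w * w) := by ring
      _ = s * w := by rw [mul_inv_mul_cancel, inv_mul_mul_self]
  refine ⟨linearIndependent_typeEVec q,
    typeERestriction q (q * (s⁻¹ * w) * (w ^ 2)⁻¹) (s⁻¹ * w * (s * w)),
    LB_mulVec_typeEVec hz, ?_⟩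
  rw [charpoly_typeERestriction, hc, hcd]

theorem type_e_LB_restriction (q : ℝ) (hq : 0 < q) (w : ℂ) (hw : w ≠ 0) :
    let s : ℂ := ((q ^ ((1 : ℝ)/2) : ℝ) : ℂ)
    let M := LB (q : ℂ) (s⁻¹ * w) (s * w) ((w ^ 2)⁻¹)
    let v : Fin 3 → (Fin 6 → ℂ) :=
      ![![-(q : ℂ), 1, 0, 0, 0, 0], ![0, 0, -(q : ℂ), 0, 1, 0], ![0, 0, 0, 1, 0, -(q : ℂ)]]
    LinearIndependent ℂ v ∧
    ∃ A : Matrix (Fin 3) (Fin 3) ℂ,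
      (∀ i, M.mulVec (v i) = ∑ j, A j i • v j) ∧
      A.charpoly = (X + C (s * w⁻¹)) * (X ^ 2 - C (s * w)) :=
  type_e_LB_restriction_general q hq w
end
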